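/- Closing property of conjugate points, missing-line case: Let W ⊆ ℝ³ be a 2-dimensional subspace such that ⟨X,X⟩ ≠ 0 for every X ∈ W \ {0} (the line ℓ does not meet the conic C). Let P₁,…,P_{2n} ∈ W \ {0} have the closing property with respect to C, and let Q₁,…,Q_{2n} ∈ W be nonzero vectors with ⟨Pᵢ,Qᵢ⟩ = 0 for each i (Qᵢ is the conjugate point of Pᵢ on ℓ with respect to C). Then Q₁,…,Q_{2n} also have the closing property with respect to C. -/

import Mathlib

/-- Minkowski product on ℝ³. -/
def mink (X Y : Fin 3 → ℝ) : ℝ := X 0 * Y 0 + X 1 * Y 1 - X 2 * Y 2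

/-- The reversion map in the point `P` (with `⟨P,P⟩ ≠ 0`), as a linear map on
representing vectors: `M_P X = ⟨P,P⟩X − 2⟨X,P⟩P`. -/
def rev (P X : Fin 3 → ℝ) : Fin 3 → ℝ := mink P P • X - (2 * mink X P) • P

/-- `chain n P X = (M_{P n} ∘ ⋯ ∘ M_{P 1}) X`, the composition of the reversions in
`P 0, …, P (n-1)`, applied in this order. -/
def chain : (n : ℕ) → (Fin n → (Fin 3 → ℝ)) → (Fin 3 → ℝ) → (Fin 3 → ℝ)
  | 0, _, X => X
  | n + 1, P, X => rev (P (Fin.last n)) (chain n (fun i => P i.castSucc) X)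

/-- The points `P 0, …, P (n-1)` have the closing property with respect to the conic
`C` iff `M_{P n} ∘ ⋯ ∘ M_{P 1}` is a nonzero scalar multiple of the identity. -/
def closes (n : ℕ) (P : Fin n → (Fin 3 → ℝ)) : Prop :=
  ∃ c : ℝ, c ≠ 0 ∧ ∀ X, chain n P X = c • X

/-!
The pole `N` of the line `W` (the Minkowski cross product of a basis of `W`) is anisotropic
and orthogonal to `W`, and the conjugate of `P ∈ W` is a multiple `t • (N × P)`. For orthogonal
`a, b` the reversion in `a × b` is `M_a ∘ M_b`, so `M_{Qᵢ} = tᵢ² M_N M_{Pᵢ}`. As `M_N` commutes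
with every `M_{Pᵢ}`, the chain of the `Qᵢ` is `∏ tᵢ²` times `M_N^{2n}` composed with the chain
of the `Pᵢ`, and `M_N^{2n} = ⟨N,N⟩^{2n} id` because the number of points is even.
-/

/-- Minkowski cross product: `mink (mcross a b) z = det (a, b, z)`. -/
def mcross (a b : Fin 3 → ℝ) : Fin 3 → ℝ :=
  ![a 1 * b 2 - a 2 * b 1, a 2 * b 0 - a 0 * b 2, -(a 0 * b 1 - a 1 * b 0)]

lemma mink_comm (a b : Fin 3 → ℝ) : mink a b = mink b a := by
  simp only [mink]; ring

lemma mink_add_right (a b c : Fin 3 → ℝ) : mink a (b + c) = mink a b + mink a c := by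
  simp only [mink, Pi.add_apply]; ring

lemma mink_smul_right (a b : Fin 3 → ℝ) (c : ℝ) : mink a (c • b) = c * mink a b := by
  simp only [mink, Pi.smul_apply, smul_eq_mul]; ring

lemma mink_mcross_left (a b : Fin 3 → ℝ) : mink (mcross a b) a = 0 := by
  simp [mink, mcross]; ring

lemma mink_mcross_right (a b : Fin 3 → ℝ) : mink (mcross a b) b = 0 := by
  simp [mink, mcross]; ring

lemma mink_mcross_self (a b : Fin 3 → ℝ) :
    mink (mcross a b) (mcross a b) = mink a b ^ 2 - mink a a * mink b b := by
  simp [mink, mcross]; ring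

lemma mcross_zero_left (b : Fin 3 → ℝ) : mcross 0 b = 0 := by
  ext i; fin_cases i <;> simp [mcross]

lemma mcross_mcross (a b c : Fin 3 → ℝ) :
    mcross (mcross a b) c = mink b c • a - mink a c • b := by
  ext i; fin_cases i <;> simp [mink, mcross] <;> ring

lemma exists_eq_smul_mcross {a b q : Fin 3 → ℝ} (ha : mink a a ≠ 0) (hb : mink b b ≠ 0)
    (hab : mink a b = 0) (haq : mink a q = 0) (hbq : mink b q = 0) :
    ∃ t : ℝ, q = t • mcross a b := by
  set c := mcross a b
  have hc : mink c c ≠ 0 := by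
    rw [mink_mcross_self, hab]
    simpa using mul_ne_zero ha hb
  have hcq : mcross c q = 0 := by
    rw [mcross_mcross, haq, hbq, zero_smul, zero_smul, sub_zero]
  have hq : mink q c • c = mink c c • q := by
    rw [← sub_eq_zero, ← mcross_mcross, hcq, mcross_zero_left]
  refine ⟨mink q c / mink c c, ?_⟩
  rw [div_eq_inv_mul, mul_smul, hq, inv_smul_smul₀ hc]

lemma rev_apply (P X : Fin 3 → ℝ) (i : Fin 3) :
    rev P X i = mink P P * X i - 2 * mink X P * P i := by
  simp [rev]

lemma rev_smul_right (P X : Fin 3 → ℝ) (c : ℝ) : rev P (c • X) = c • rev P X := by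
  ext i; simp only [rev_apply, Pi.smul_apply, smul_eq_mul, mink]; ring

lemma rev_smul_left (P X : Fin 3 → ℝ) (c : ℝ) : rev (c • P) X = c ^ 2 • rev P X := by
  ext i; simp only [rev_apply, Pi.smul_apply, smul_eq_mul, mink]; ring

lemma rev_rev_self (P X : Fin 3 → ℝ) : rev P (rev P X) = mink P P ^ 2 • X := by
  ext i; simp only [rev_apply, Pi.smul_apply, smul_eq_mul, mink]; ring

lemma rev_comm {a b : Fin 3 → ℝ} (hab : mink a b = 0) (X : Fin 3 → ℝ) :
    rev a (rev b X) = rev b (rev a X) := by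
  have identity : ∀ i, rev a (rev b X) i - rev b (rev a X) i =
      4 * (mink X b * a i - mink X a * b i) * mink a b := by
    intro i; simp only [rev_apply, mink]; ring
  ext i
  rw [← sub_eq_zero, identity, hab, mul_zero]

lemma rev_mcross {a b : Fin 3 → ℝ} (hab : mink a b = 0) (X : Fin 3 → ℝ) :
    rev (mcross a b) X = rev a (rev b X) := by
  have identity : ∀ i, rev (mcross a b) X i - rev a (rev b X) i =
      (2 * (mink X a * b i - mink X b * a i) - mink a b * X i) * mink a b := by
    intro i; fin_cases i <;> simp [rev_apply, mink, mcross] <;> ring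
  ext i
  rw [← sub_eq_zero, identity, hab, mul_zero]

lemma iterate_rev_two_mul (N : Fin 3 → ℝ) (n : ℕ) (X : Fin 3 → ℝ) :
    (rev N)^[2 * n] X = (mink N N ^ 2) ^ n • X := by
  rw [Function.iterate_mul, show (rev N)^[2] = (mink N N ^ 2 • ·) from funext (rev_rev_self N),
    smul_iterate]

lemma chain_eq_smul_iterate_rev (N : Fin 3 → ℝ) :
    ∀ (m : ℕ) (P Q : Fin m → (Fin 3 → ℝ)) (s : Fin m → ℝ),
      (∀ i, mink N (P i) = 0) → (∀ i X, rev (Q i) X = s i • rev N (rev (P i) X)) →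
      ∀ X, chain m Q X = (∏ i, s i) • (rev N)^[m] (chain m P X)
  | 0, _, _, _, _, _, X => by simp [chain]
  | m + 1, P, Q, s, hNP, hQ, X => by
    have ih := chain_eq_smul_iterate_rev N m (fun i => P i.castSucc) (fun i => Q i.castSucc)
      (fun i => s i.castSucc) (fun i => hNP i.castSucc) (fun i => hQ i.castSucc) X
    have hcomm : Function.Commute (rev (P (Fin.last m))) (rev N) :=
      fun Y => rev_comm (by rw [mink_comm]; exact hNP _) Y
    simp only [chain]
    rw [ih, rev_smul_right, hQ, (hcomm.iterate_right m).eq, ← Function.iterate_succ_apply' (rev N),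
      smul_smul, Fin.prod_univ_castSucc]

lemma exists_pole (W : Submodule ℝ (Fin 3 → ℝ)) (hdim : Module.finrank ℝ W = 2)
    (hmiss : ∀ X ∈ W, X ≠ 0 → mink X X ≠ 0) :
    ∃ N, mink N N ≠ 0 ∧ ∀ x ∈ W, mink N x = 0 := by
  let b := Module.finBasisOfFinrankEq ℝ W hdim
  set u : Fin 3 → ℝ := ((b 0 : W) : Fin 3 → ℝ)
  set v : Fin 3 → ℝ := ((b 1 : W) : Fin 3 → ℝ)
  have huv : LinearIndependent ℝ ![u, v] := by
    have hb : LinearIndependent ℝ (W.subtype ∘ b) := b.linearIndependent.map' _ W.ker_subtype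
    rwa [show W.subtype ∘ b = ![u, v] by ext i; fin_cases i <;> rfl] at hb
  have hu : mink u u ≠ 0 := hmiss u (b 0).2 (huv.ne_zero 0)
  refine ⟨mcross u v, fun hN => ?_, fun x hx => ?_⟩
  · -- `⟨X,X⟩ = -⟨u,u⟩⟨N,N⟩` for this `X ∈ W`
    set X := mink u v • u + (-mink u u) • v
    have hX : X ≠ 0 := fun h0 => hu (neg_eq_zero.mp (LinearIndependent.pair_iff.mp huv _ _ h0).2)
    refine hmiss X (W.add_mem (W.smul_mem _ (b 0).2) (W.smul_mem _ (b 1).2)) hX ?_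
    rw [mink_mcross_self] at hN
    simp only [X, mink, Pi.add_apply, Pi.smul_apply, smul_eq_mul] at hN ⊢
    linear_combination (-(u 0 * u 0 + u 1 * u 1 - u 2 * u 2)) * hN
  · have hx' := congrArg Subtype.val (b.sum_repr ⟨x, hx⟩)
    simp only [Fin.sum_univ_two, Submodule.coe_add, Submodule.coe_smul] at hx'
    rw [← hx', mink_add_right, mink_smul_right, mink_smul_right, mink_mcross_left,
      mink_mcross_right, mul_zero, mul_zero, add_zero]

/-- **Closing property of conjugate points, missing-line case.** If the line `W` does
not meet the conic `C`, and the points `P 0, …, P (2n-1)` on `W` have the closing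
property with respect to `C`, then so do their conjugate points `Q 0, …, Q (2n-1)` on
`W` (`⟨Pᵢ,Qᵢ⟩ = 0`). -/
theorem conjugate_points_closing_missing
    (W : Submodule ℝ (Fin 3 → ℝ)) (hdim : Module.finrank ℝ W = 2)
    (hmiss : ∀ X ∈ W, X ≠ 0 → mink X X ≠ 0)
    (n : ℕ) (P Q : Fin (2 * n) → (Fin 3 → ℝ))
    (hPW : ∀ i, P i ∈ W) (hP0 : ∀ i, P i ≠ 0)
    (hclose : closes (2 * n) P)
    (hQW : ∀ i, Q i ∈ W) (hQ0 : ∀ i, Q i ≠ 0)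
    (hconj : ∀ i, mink (P i) (Q i) = 0) :
    closes (2 * n) Q := by
  obtain ⟨c, hc, hchain⟩ := hclose
  obtain ⟨N, hNN, hNW⟩ := exists_pole W hdim hmiss
  have hNP : ∀ i, mink N (P i) = 0 := fun i => hNW _ (hPW i)
  choose t ht using fun i => exists_eq_smul_mcross hNN (hmiss _ (hPW i) (hP0 i)) (hNP i)
    (hNW _ (hQW i)) (hconj i)
  have ht0 : ∀ i, t i ≠ 0 := fun i h => hQ0 i (by rw [ht i, h, zero_smul])
  have hrevQ : ∀ i X, rev (Q i) X = t i ^ 2 • rev N (rev (P i) X) := fun i X => by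
    rw [ht i, rev_smul_left, rev_mcross (hNP i)]
  refine ⟨(∏ i, t i ^ 2) * ((mink N N ^ 2) ^ n * c), ?_, fun X => ?_⟩
  · exact mul_ne_zero (Finset.prod_ne_zero_iff.mpr fun i _ => pow_ne_zero _ (ht0 i))
      (mul_ne_zero (pow_ne_zero _ (pow_ne_zero _ hNN)) hc)
  · rw [chain_eq_smul_iterate_rev N _ P Q _ hNP hrevQ, hchain, iterate_rev_two_mul, smul_smul,
      smul_smul, mul_assoc]
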